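/- arXiv:2211.16633 — 6 statements merged into one kernel-verified Lean document; each statement's English description precedes it below -/
import Mathlib

section
/- The sampled safe set is control invariant: if x̂ is an equilibrium (x̂ ∈ X, 0 ∈ U, and A x̂ = x̂) and SS is the sampled safe set of a finite nonempty family of admissible trajectories to x̂, then SS ⊆ X, x̂ ∈ SS, and for every z ∈ SS there exists u ∈ U such that A z + B u ∈ SS. -/
open Matrix

/-- An admissible trajectory of length `T` to `xhat`. -/
def AdmTraj {n m : ℕ} (A : Matrix (Fin n) (Fin n) ℝ) (B : Matrix (Fin n) (Fin m) ℝ)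
    (X : Set (Fin n → ℝ)) (U : Set (Fin m → ℝ)) (xhat : Fin n → ℝ) (T : ℕ)
    (x : ℕ → Fin n → ℝ) (u : ℕ → Fin m → ℝ) : Prop :=
  (∀ t < T, x (t + 1) = A.mulVec (x t) + B.mulVec (u t)) ∧
  (∀ t ≤ T, x t ∈ X) ∧ (∀ t < T, u t ∈ U) ∧ x T = xhat

/-- The sampled safe set of a family of trajectories: all visited states. -/
def sampledSafeSet {n : ℕ} {ι : Type} (T : ι → ℕ)
    (xs : ι → ℕ → Fin n → ℝ) : Set (Fin n → ℝ) :=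
  {z | ∃ i, ∃ t ≤ T i, xs i t = z}

namespace AdmTraj

variable {n m : ℕ} {A : Matrix (Fin n) (Fin n) ℝ} {B : Matrix (Fin n) (Fin m) ℝ}
  {X : Set (Fin n → ℝ)} {U : Set (Fin m → ℝ)} {xhat : Fin n → ℝ} {T : ℕ}
  {x : ℕ → Fin n → ℝ} {u : ℕ → Fin m → ℝ}

theorem step (h : AdmTraj A B X U xhat T x u) {t : ℕ} (ht : t < T) :
    x (t + 1) = A *ᵥ x t + B *ᵥ u t :=
  h.1 t ht

theorem state_mem (h : AdmTraj A B X U xhat T x u) {t : ℕ} (ht : t ≤ T) : x t ∈ X :=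
  h.2.1 t ht

theorem input_mem (h : AdmTraj A B X U xhat T x u) {t : ℕ} (ht : t < T) : u t ∈ U :=
  h.2.2.1 t ht

theorem state_last (h : AdmTraj A B X U xhat T x u) : x T = xhat :=
  h.2.2.2

/-- Before time `T` the recorded input leads to the next state; at time `T` the trajectory sits
at the equilibrium `xhat`, which the input `0` keeps fixed. -/
theorem exists_input_step (h : AdmTraj A B X U xhat T x u) (h0U : (0 : Fin m → ℝ) ∈ U)
    (heq : A *ᵥ xhat = xhat) {t : ℕ} (ht : t ≤ T) :
    ∃ v ∈ U, ∃ s ≤ T, x s = A *ᵥ x t + B *ᵥ v := by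
  rcases ht.lt_or_eq with ht | rfl
  · exact ⟨u t, h.input_mem ht, t + 1, ht, h.step ht⟩
  · refine ⟨0, h0U, t, le_rfl, ?_⟩
    rw [h.state_last, heq, mulVec_zero, add_zero]

end AdmTraj

theorem sampled_safe_set_control_invariant_general {n m : ℕ}
    (A : Matrix (Fin n) (Fin n) ℝ) (B : Matrix (Fin n) (Fin m) ℝ)
    (X : Set (Fin n → ℝ)) (U : Set (Fin m → ℝ)) (xhat : Fin n → ℝ)
    (h0U : (0 : Fin m → ℝ) ∈ U) (heq : A.mulVec xhat = xhat)
    {ι : Type} [Nonempty ι]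
    (T : ι → ℕ) (xs : ι → ℕ → Fin n → ℝ) (us : ι → ℕ → Fin m → ℝ)
    (hadm : ∀ i, AdmTraj A B X U xhat (T i) (xs i) (us i)) :
    sampledSafeSet T xs ⊆ X ∧
    xhat ∈ sampledSafeSet T xs ∧
    ∀ z ∈ sampledSafeSet T xs, ∃ u ∈ U,
      A.mulVec z + B.mulVec u ∈ sampledSafeSet T xs := by
  refine ⟨?_, ?_, ?_⟩
  · rintro z ⟨i, t, ht, rfl⟩
    exact (hadm i).state_mem ht
  · obtain ⟨i⟩ := ‹Nonempty ι›
    exact ⟨i, T i, le_rfl, (hadm i).state_last⟩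
  · rintro z ⟨i, t, ht, rfl⟩
    obtain ⟨v, hv, s, hs, hnext⟩ := (hadm i).exists_input_step h0U heq ht
    exact ⟨v, hv, i, s, hs, hnext⟩

/-- the sampled safe set of a finite nonempty family of admissible trajectories
to an equilibrium `xhat` is contained in `X`, contains `xhat`, and is control invariant. -/
theorem sampled_safe_set_control_invariant {n m : ℕ}
    (A : Matrix (Fin n) (Fin n) ℝ) (B : Matrix (Fin n) (Fin m) ℝ)
    (X : Set (Fin n → ℝ)) (U : Set (Fin m → ℝ)) (xhat : Fin n → ℝ)
    (hxX : xhat ∈ X) (h0U : (0 : Fin m → ℝ) ∈ U) (heq : A.mulVec xhat = xhat)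
    {ι : Type} [Fintype ι] [Nonempty ι]
    (T : ι → ℕ) (xs : ι → ℕ → Fin n → ℝ) (us : ι → ℕ → Fin m → ℝ)
    (hadm : ∀ i, AdmTraj A B X U xhat (T i) (xs i) (us i)) :
    sampledSafeSet T xs ⊆ X ∧
    xhat ∈ sampledSafeSet T xs ∧
    ∀ z ∈ sampledSafeSet T xs, ∃ u ∈ U,
      A.mulVec z + B.mulVec u ∈ sampledSafeSet T xs :=
  sampled_safe_set_control_invariant_general A B X U xhat h0U heq T xs us hadm
end

section
/- Descent property of the sampled cost-to-go: let x̂ be an equilibrium (x̂ ∈ X, 0 ∈ U, A x̂ = x̂), let SS and P be the sampled safe set and cost-to-go of a finite nonempty family of admissible trajectories to x̂. Then P(z) ≥ 0 for all z ∈ SS, P(x̂) = 0, and for every z ∈ SS there exists u ∈ U such that z⁺ = A z + B u ∈ SS and P(z) ≥ h(z, u) + P(z⁺). -/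
open Matrix

/-- Stage cost `h(x,u) = (x − xhat)ᵀ Q (x − xhat) + uᵀ R u`. -/
def stageCost {n m : ℕ} (Q : Matrix (Fin n) (Fin n) ℝ) (R : Matrix (Fin m) (Fin m) ℝ)
    (xhat : Fin n → ℝ) (x : Fin n → ℝ) (u : Fin m → ℝ) : ℝ :=
  (x - xhat) ⬝ᵥ Q.mulVec (x - xhat) + u ⬝ᵥ R.mulVec u

/-- The sampled cost-to-go at a visited state `z`: minimum over all trajectories of the
family and times `t` at which `z` is visited of the remaining cost `Σ_{k=t}^{T−1} h`. -/
noncomputable def costToGo {n m : ℕ} {ι : Type}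
    (Q : Matrix (Fin n) (Fin n) ℝ) (R : Matrix (Fin m) (Fin m) ℝ) (xhat : Fin n → ℝ)
    (T : ι → ℕ) (xs : ι → ℕ → Fin n → ℝ) (us : ι → ℕ → Fin m → ℝ)
    (z : Fin n → ℝ) : ℝ :=
  sInf {c | ∃ i, ∃ t ≤ T i, xs i t = z ∧
    c = ∑ k ∈ Finset.Ico t (T i), stageCost Q R xhat (xs i k) (us i k)}

/-- descent property of the sampled cost-to-go. At an equilibrium target,
`P ≥ 0` on the sampled safe set, `P xhat = 0`, and from every point of the safe set there
is an admissible input keeping the successor in the safe set while decreasing `P` by at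
least the stage cost. -/
theorem cost_to_go_descent {n m : ℕ}
    (A : Matrix (Fin n) (Fin n) ℝ) (B : Matrix (Fin n) (Fin m) ℝ)
    (X : Set (Fin n → ℝ)) (U : Set (Fin m → ℝ)) (xhat : Fin n → ℝ)
    (Q : Matrix (Fin n) (Fin n) ℝ) (R : Matrix (Fin m) (Fin m) ℝ)
    (hQ : Q.PosDef) (hR : R.PosDef)
    (hxX : xhat ∈ X) (h0U : (0 : Fin m → ℝ) ∈ U) (heq : A.mulVec xhat = xhat)
    {ι : Type} [Fintype ι] [Nonempty ι]
    (T : ι → ℕ) (xs : ι → ℕ → Fin n → ℝ) (us : ι → ℕ → Fin m → ℝ)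
    (hadm : ∀ i, AdmTraj A B X U xhat (T i) (xs i) (us i)) :
    let SS := sampledSafeSet T xs
    let P := costToGo Q R xhat T xs us
    (∀ z ∈ SS, 0 ≤ P z) ∧
    P xhat = 0 ∧
    (∀ z ∈ SS, ∃ u ∈ U, A.mulVec z + B.mulVec u ∈ SS ∧
      stageCost Q R xhat z u + P (A.mulVec z + B.mulVec u) ≤ P z) := by
  intro SS P
  -- stage cost is nonnegative
  have hsc : ∀ x u, 0 ≤ stageCost Q R xhat x u := by
    intro x u
    have h1 := hQ.posSemidef.dotProduct_mulVec_nonneg (x - xhat)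
    have h2 := hR.posSemidef.dotProduct_mulVec_nonneg u
    simp only [RCLike.star_def, star_trivial] at h1 h2
    exact add_nonneg h1 h2
  set S : (Fin n → ℝ) → Set ℝ := fun z => {c | ∃ i, ∃ t ≤ T i, xs i t = z ∧
    c = ∑ k ∈ Finset.Ico t (T i), stageCost Q R xhat (xs i k) (us i k)} with hS
  have hPdef : ∀ z, P z = sInf (S z) := fun z => rfl
  have hmem_nonneg : ∀ z, ∀ c ∈ S z, 0 ≤ c := by
    rintro z c ⟨i, t, ht, hx, rfl⟩
    exact Finset.sum_nonneg fun k _ => hsc _ _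
  have hbdd : ∀ z, BddBelow (S z) := fun z => ⟨0, fun c hc => hmem_nonneg z c hc⟩
  have hne : ∀ z ∈ SS, (S z).Nonempty := by
    rintro z ⟨i, t, ht, hx⟩
    exact ⟨_, i, t, ht, hx, rfl⟩
  have hfin : ∀ z, (S z).Finite := by
    intro z
    apply Set.Finite.subset (Set.finite_iUnion (fun i : ι =>
      (Set.finite_Iic (T i)).image
        (fun t => ∑ k ∈ Finset.Ico t (T i), stageCost Q R xhat (xs i k) (us i k))))
    rintro c ⟨i, t, ht, _, rfl⟩
    exact Set.mem_iUnion.2 ⟨i, ⟨t, ht, rfl⟩⟩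
  have hPnn : ∀ z ∈ SS, 0 ≤ P z := by
    intro z hz
    exact le_csInf (hne z hz) (hmem_nonneg z)
  have hxhatSS : xhat ∈ SS := by
    obtain ⟨i⟩ := (inferInstance : Nonempty ι)
    exact ⟨i, T i, le_rfl, (hadm i).2.2.2⟩
  have hPxhat : P xhat = 0 := by
    apply le_antisymm
    · obtain ⟨i⟩ := (inferInstance : Nonempty ι)
      have : (0 : ℝ) ∈ S xhat := ⟨i, T i, le_rfl, (hadm i).2.2.2, by simp⟩
      exact csInf_le (hbdd xhat) this
    · exact hPnn xhat hxhatSS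
  refine ⟨hPnn, hPxhat, ?_⟩
  intro z hz
  have hPin : P z ∈ S z := Set.Nonempty.csInf_mem (hne z hz) (hfin z)
  obtain ⟨i, t, ht, hxz, hc⟩ := hPin
  rcases lt_or_eq_of_le ht with hlt | heqt
  · -- t < T i : use the input of the trajectory
    refine ⟨us i t, (hadm i).2.2.1 t hlt, ?_, ?_⟩
    · refine ⟨i, t + 1, hlt, ?_⟩
      rw [← hxz]; exact (hadm i).1 t hlt
    · have hsucc : A.mulVec z + B.mulVec (us i t) = xs i (t + 1) := by
        rw [← hxz]; exact ((hadm i).1 t hlt).symm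
      rw [hsucc]
      have htail : P (xs i (t + 1)) ≤
          ∑ k ∈ Finset.Ico (t + 1) (T i), stageCost Q R xhat (xs i k) (us i k) :=
        csInf_le (hbdd _) ⟨i, t + 1, hlt, rfl, rfl⟩
      have hsplit : ∑ k ∈ Finset.Ico t (T i), stageCost Q R xhat (xs i k) (us i k)
          = stageCost Q R xhat (xs i t) (us i t)
            + ∑ k ∈ Finset.Ico (t + 1) (T i), stageCost Q R xhat (xs i k) (us i k) :=
        Finset.sum_eq_sum_Ico_succ_bot hlt _
      rw [hc, hsplit, ← hxz]
      linarith
  · -- t = T i : z = xhat, use u = 0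
    subst heqt
    have hzx : z = xhat := by rw [← hxz, (hadm i).2.2.2]
    refine ⟨0, h0U, ?_, ?_⟩
    · rw [hzx]
      simpa [heq] using hxhatSS
    · have hPz : P z = 0 := by rw [hc]; simp
      have hstage : stageCost Q R xhat z 0 = 0 := by
        rw [hzx]; simp [stageCost]
      rw [hstage, hPz, hzx]
      simp [heq, hPxhat]
end

section
/- Decrease of the MPC value function: suppose SS ⊆ X, P : SS → ℝ satisfies P ≥ 0 and the descent property (for every z ∈ SS there exists u ∈ U with A z + B u ∈ SS and P(z) ≥ h(z,u) + P(A z + B u)). If (x*, u*) is an N-step feasible sequence from x0 that attains the infimum J*(x0), then the MPC problem at x1 = x*(1) is feasible and J*(x1) ≤ J*(x0) − h(x0, u*(0)). -/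
open Matrix

/-- An `N`-step feasible sequence from `x0`. -/
def FeasSeq {n m : ℕ} (A : Matrix (Fin n) (Fin n) ℝ) (B : Matrix (Fin n) (Fin m) ℝ)
    (X : Set (Fin n → ℝ)) (U : Set (Fin m → ℝ)) (SS : Set (Fin n → ℝ)) (N : ℕ)
    (x0 : Fin n → ℝ) (x : ℕ → Fin n → ℝ) (u : ℕ → Fin m → ℝ) : Prop :=
  x 0 = x0 ∧ (∀ t < N, x (t + 1) = A.mulVec (x t) + B.mulVec (u t)) ∧
  (∀ t < N, x (t + 1) ∈ X) ∧ (∀ t < N, u t ∈ U) ∧ x N ∈ SS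

/-- Cost of an `N`-step sequence: stage costs plus terminal cost `P` at the final state. -/
noncomputable def seqCost {n m : ℕ}
    (Q : Matrix (Fin n) (Fin n) ℝ) (R : Matrix (Fin m) (Fin m) ℝ) (xhat : Fin n → ℝ)
    (P : (Fin n → ℝ) → ℝ) (N : ℕ) (x : ℕ → Fin n → ℝ) (u : ℕ → Fin m → ℝ) : ℝ :=
  (∑ t ∈ Finset.range N, stageCost Q R xhat (x t) (u t)) + P (x N)

/-- MPC value function: infimum of the cost over `N`-step feasible sequences from `x0`. -/
noncomputable def Jstar {n m : ℕ}
    (A : Matrix (Fin n) (Fin n) ℝ) (B : Matrix (Fin n) (Fin m) ℝ)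
    (X : Set (Fin n → ℝ)) (U : Set (Fin m → ℝ)) (SS : Set (Fin n → ℝ))
    (Q : Matrix (Fin n) (Fin n) ℝ) (R : Matrix (Fin m) (Fin m) ℝ) (xhat : Fin n → ℝ)
    (P : (Fin n → ℝ) → ℝ) (N : ℕ) (x0 : Fin n → ℝ) : ℝ :=
  sInf {c | ∃ (x : ℕ → Fin n → ℝ) (u : ℕ → Fin m → ℝ),
    FeasSeq A B X U SS N x0 x u ∧ c = seqCost Q R xhat P N x u}

/-- decrease of the MPC value function. If the terminal data `(SS, P)`
satisfy `SS ⊆ X`, `P ≥ 0` on `SS`, and the descent property, and `(x*, u*)` is an optimal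
`N`-step feasible sequence from `x0`, then the MPC problem at `x1 = x*(1)` is feasible and
`J*(x1) ≤ J*(x0) − h(x0, u*(0))`. -/
theorem value_function_decrease {n m : ℕ}
    (A : Matrix (Fin n) (Fin n) ℝ) (B : Matrix (Fin n) (Fin m) ℝ)
    (X : Set (Fin n → ℝ)) (U : Set (Fin m → ℝ)) (SS : Set (Fin n → ℝ))
    (Q : Matrix (Fin n) (Fin n) ℝ) (R : Matrix (Fin m) (Fin m) ℝ) (xhat : Fin n → ℝ)
    (hQ : Q.PosDef) (hR : R.PosDef)
    (P : (Fin n → ℝ) → ℝ) (N : ℕ) (hN : 1 ≤ N)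
    (hSSX : SS ⊆ X)
    (hP0 : ∀ z ∈ SS, 0 ≤ P z)
    (hdesc : ∀ z ∈ SS, ∃ u ∈ U, A.mulVec z + B.mulVec u ∈ SS ∧
      stageCost Q R xhat z u + P (A.mulVec z + B.mulVec u) ≤ P z)
    (x0 : Fin n → ℝ) (xstar : ℕ → Fin n → ℝ) (ustar : ℕ → Fin m → ℝ)
    (hfeas : FeasSeq A B X U SS N x0 xstar ustar)
    (hopt : seqCost Q R xhat P N xstar ustar = Jstar A B X U SS Q R xhat P N x0) :
    (∃ (x : ℕ → Fin n → ℝ) (u : ℕ → Fin m → ℝ), FeasSeq A B X U SS N (xstar 1) x u) ∧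
    Jstar A B X U SS Q R xhat P N (xstar 1) ≤
      Jstar A B X U SS Q R xhat P N x0 - stageCost Q R xhat x0 (ustar 0) := by

  obtain ⟨K, rfl⟩ : ∃ K, N = K + 1 := ⟨N - 1, by omega⟩
  obtain ⟨hx0, hdyn, hX, hU, hterm⟩ := hfeas
  obtain ⟨utld, hutld, hznew, hdec⟩ := hdesc (xstar (K + 1)) hterm
  set znew := A.mulVec (xstar (K + 1)) + B.mulVec utld with hzdef
  set x' : ℕ → Fin n → ℝ := fun t => if t = K + 1 then znew else xstar (t + 1) with hx'
  set u' : ℕ → Fin m → ℝ := fun t => if t = K then utld else ustar (t + 1) with hu'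
  have hx'lt : ∀ t, t < K + 1 → x' t = xstar (t + 1) := by
    intro t ht; simp only [hx']; rw [if_neg (show t ≠ K + 1 by omega)]
  have hx'N : x' (K + 1) = znew := by simp [hx']
  have hu'lt : ∀ t, t < K → u' t = ustar (t + 1) := by
    intro t ht; simp only [hu']; rw [if_neg (show t ≠ K by omega)]
  have hu'K : u' K = utld := by simp [hu']
  have hfeas' : FeasSeq A B X U SS (K + 1) (xstar 1) x' u' := by
    refine ⟨hx'lt 0 (by omega), ?_, ?_, ?_, by rw [hx'N]; exact hznew⟩
    · intro t ht
      rcases Nat.lt_or_ge t K with h | h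
      · rw [hx'lt (t + 1) (by omega), hx'lt t (by omega), hu'lt t h]
        exact hdyn (t + 1) (by omega)
      · have : t = K := by omega
        subst this
        rw [hx'N, hx'lt t (by omega), hu'K]
    · intro t ht
      rcases Nat.lt_or_ge t K with h | h
      · rw [hx'lt (t + 1) (by omega)]
        exact hX (t + 1) (by omega)
      · have : t = K := by omega
        subst this
        rw [hx'N]; exact hSSX hznew
    · intro t ht
      rcases Nat.lt_or_ge t K with h | h
      · rw [hu'lt t h]; exact hU (t + 1) (by omega)
      · have : t = K := by omega
        subst this; rw [hu'K]; exact hutld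
  have hcost : seqCost Q R xhat P (K + 1) x' u' ≤
      seqCost Q R xhat P (K + 1) xstar ustar - stageCost Q R xhat x0 (ustar 0) := by
    have hsum' : ∀ t ∈ Finset.range K,
        stageCost Q R xhat (x' t) (u' t) = stageCost Q R xhat (xstar (t + 1)) (ustar (t + 1)) := by
      intro t ht
      rw [Finset.mem_range] at ht
      rw [hx'lt t (by omega), hu'lt t ht]
    unfold seqCost
    rw [Finset.sum_range_succ, Finset.sum_congr rfl hsum', hx'N,
      hx'lt K (by omega), hu'K]
    have horig : ∑ t ∈ Finset.range (K + 1), stageCost Q R xhat (xstar t) (ustar t)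
        = (∑ t ∈ Finset.range K, stageCost Q R xhat (xstar (t + 1)) (ustar (t + 1)))
          + stageCost Q R xhat x0 (ustar 0) := by
      rw [Finset.sum_range_succ', hx0]
    rw [horig]
    linarith [hdec]
  have hnonneg : ∀ c ∈ {c | ∃ (x : ℕ → Fin n → ℝ) (u : ℕ → Fin m → ℝ),
      FeasSeq A B X U SS (K + 1) (xstar 1) x u ∧ c = seqCost Q R xhat P (K + 1) x u}, (0:ℝ) ≤ c := by
    rintro c ⟨x, u, hf, rfl⟩
    unfold seqCost
    have h1 : (0:ℝ) ≤ ∑ t ∈ Finset.range (K + 1), stageCost Q R xhat (x t) (u t) := by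
      apply Finset.sum_nonneg
      intro t _
      unfold stageCost
      have a1 := hQ.posSemidef.dotProduct_mulVec_nonneg (x t - xhat)
      have a2 := hR.posSemidef.dotProduct_mulVec_nonneg (u t)
      simp only [star_trivial] at a1 a2
      have a1' : (0:ℝ) ≤ (x t - xhat) ⬝ᵥ Q.mulVec (x t - xhat) := by
        simpa using a1
      have a2' : (0:ℝ) ≤ u t ⬝ᵥ R.mulVec (u t) := by simpa using a2
      linarith
    have h2 : 0 ≤ P (x (K + 1)) := hP0 _ hf.2.2.2.2
    linarith
  have hJle : Jstar A B X U SS Q R xhat P (K + 1) (xstar 1) ≤ seqCost Q R xhat P (K + 1) x' u' := by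
    apply csInf_le ⟨0, hnonneg⟩
    exact ⟨x', u', hfeas', rfl⟩
  exact ⟨⟨x', u', hfeas'⟩, by rw [← hopt]; linarith⟩
end

section
/- Asymptotic stability of the target under the learning MPC (Theorem 2, obstacle-free case): suppose SS ⊆ X, P : SS → ℝ satisfies P ≥ 0 and the descent property (for every z ∈ SS there exists u ∈ U with A z + B u ∈ SS and P(z) ≥ h(z,u) + P(A z + B u)). Let x : ℕ → ℝⁿ and u : ℕ → ℝᵐ be a closed-loop trajectory with x(k+1) = A x(k) + B u(k) such that for every k there exists an N-step feasible sequence from x(k) attaining the infimum J*(x(k)) whose first input is u(k). Then x(k) → x̂ as k → ∞. -/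
open Matrix

/-- Positive definite quadratic forms are bounded below by a positive multiple of `‖v‖²`. -/
lemma quad_lower_aux {n : ℕ} {Q : Matrix (Fin n) (Fin n) ℝ} (hQ : Q.PosDef) (hn : 0 < n) :
    ∃ c > 0, ∀ v : Fin n → ℝ, c * ‖v‖ ^ 2 ≤ v ⬝ᵥ Q.mulVec v := by
  have hcont : Continuous fun v : Fin n → ℝ => v ⬝ᵥ Q.mulVec v := by
    simp only [dotProduct, mulVec]
    exact continuous_finset_sum _ fun i _ => (continuous_apply i).mul
      (continuous_finset_sum _ fun j _ => continuous_const.mul (continuous_apply j))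
  have hcomp : IsCompact (Metric.sphere (0 : Fin n → ℝ) 1) := isCompact_sphere 0 1
  have : Nontrivial (Fin n → ℝ) := by
    refine ⟨fun _ => 0, fun _ => 1, ?_⟩
    intro h
    have := congrFun h ⟨0, hn⟩
    norm_num at this
  have hne : (Metric.sphere (0 : Fin n → ℝ) 1).Nonempty :=
    NormedSpace.sphere_nonempty.2 (by norm_num)
  obtain ⟨v0, hv0, hmin⟩ := hcomp.exists_isMinOn hne hcont.continuousOn
  have hv0norm : ‖v0‖ = 1 := by simpa using hv0
  have hv0ne : v0 ≠ 0 := by intro h; rw [h] at hv0norm; simp at hv0norm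
  have hc : 0 < v0 ⬝ᵥ Q.mulVec v0 := by have := hQ.dotProduct_mulVec_pos hv0ne; simpa using this
  refine ⟨_, hc, fun v => ?_⟩
  rcases eq_or_ne v 0 with rfl | hv
  · simp
  · have hnv : (0 : ℝ) < ‖v‖ := norm_pos_iff.2 hv
    set w : Fin n → ℝ := ‖v‖⁻¹ • v with hw
    have hwn : ‖w‖ = 1 := by
      rw [hw, norm_smul]; simp [abs_of_pos hnv, inv_mul_cancel₀ hnv.ne']
    have hmw : v0 ⬝ᵥ Q.mulVec v0 ≤ w ⬝ᵥ Q.mulVec w := hmin (by simpa using hwn)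
    have hval : w ⬝ᵥ Q.mulVec w = ‖v‖⁻¹ ^ 2 * (v ⬝ᵥ Q.mulVec v) := by
      rw [hw, smul_dotProduct, Matrix.mulVec_smul, dotProduct_smul]
      ring_nf
    have h2 : v0 ⬝ᵥ Q.mulVec v0 * ‖v‖ ^ 2 ≤ v ⬝ᵥ Q.mulVec v := by
      have := mul_le_mul_of_nonneg_right hmw (le_of_lt (pow_pos hnv 2))
      rw [hval] at this
      calc v0 ⬝ᵥ Q.mulVec v0 * ‖v‖ ^ 2 ≤ ‖v‖⁻¹ ^ 2 * (v ⬝ᵥ Q.mulVec v) * ‖v‖ ^ 2 := this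
        _ = v ⬝ᵥ Q.mulVec v := by field_simp
    linarith

/-- Theorem 2, obstacle-free case: asymptotic stability of the target
under the learning MPC. Along any closed-loop trajectory whose inputs are first inputs of
optimal `N`-step feasible sequences, the state converges to the target `xhat`. -/
theorem asymptotic_stability_of_target {n m : ℕ}
    (A : Matrix (Fin n) (Fin n) ℝ) (B : Matrix (Fin n) (Fin m) ℝ)
    (X : Set (Fin n → ℝ)) (U : Set (Fin m → ℝ)) (SS : Set (Fin n → ℝ))
    (Q : Matrix (Fin n) (Fin n) ℝ) (R : Matrix (Fin m) (Fin m) ℝ) (xhat : Fin n → ℝ)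
    (hQ : Q.PosDef) (hR : R.PosDef)
    (P : (Fin n → ℝ) → ℝ) (N : ℕ) (hN : 1 ≤ N)
    (hSSX : SS ⊆ X)
    (hP0 : ∀ z ∈ SS, 0 ≤ P z)
    (hdesc : ∀ z ∈ SS, ∃ u ∈ U, A.mulVec z + B.mulVec u ∈ SS ∧
      stageCost Q R xhat z u + P (A.mulVec z + B.mulVec u) ≤ P z)
    (x : ℕ → Fin n → ℝ) (u : ℕ → Fin m → ℝ)
    (hdyn : ∀ k, x (k + 1) = A.mulVec (x k) + B.mulVec (u k))
    (hopt : ∀ k, ∃ (xs : ℕ → Fin n → ℝ) (us : ℕ → Fin m → ℝ),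
      FeasSeq A B X U SS N (x k) xs us ∧
      seqCost Q R xhat P N xs us = Jstar A B X U SS Q R xhat P N (x k) ∧
      us 0 = u k) :
    Filter.Tendsto x Filter.atTop (nhds xhat) := by
  rcases Nat.eq_zero_or_pos n with hn | hn
  · subst hn
    have hx : x = fun _ => xhat := funext fun k => Subsingleton.elim _ _
    rw [hx]
    exact tendsto_const_nhds
  obtain ⟨M, rfl⟩ : ∃ M, N = M + 1 := ⟨N - 1, (Nat.succ_pred_eq_of_pos hN).symm⟩
  have hstage_nonneg : ∀ (v : Fin n → ℝ) (w : Fin m → ℝ), 0 ≤ stageCost Q R xhat v w := by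
    intro v w
    have h1 : 0 ≤ (v - xhat) ⬝ᵥ Q.mulVec (v - xhat) := by simpa using hQ.posSemidef.dotProduct_mulVec_nonneg (v - xhat)
    have h2 : 0 ≤ w ⬝ᵥ R.mulVec w := by simpa using hR.posSemidef.dotProduct_mulVec_nonneg w
    unfold stageCost; linarith
  have hseq_nonneg : ∀ (x0 : Fin n → ℝ) (xs : ℕ → Fin n → ℝ) (us : ℕ → Fin m → ℝ),
      FeasSeq A B X U SS (M + 1) x0 xs us → 0 ≤ seqCost Q R xhat P (M + 1) xs us := by
    intro x0 xs us hf
    have h1 : 0 ≤ ∑ t ∈ Finset.range (M + 1), stageCost Q R xhat (xs t) (us t) :=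
      Finset.sum_nonneg fun t _ => hstage_nonneg _ _
    have hP := hP0 _ hf.2.2.2.2
    unfold seqCost; linarith
  have hbdd : ∀ z : Fin n → ℝ, 0 ∈ lowerBounds {c | ∃ xs us,
      FeasSeq A B X U SS (M + 1) z xs us ∧ c = seqCost Q R xhat P (M + 1) xs us} := by
    rintro z c ⟨xs, us, hf, rfl⟩
    exact hseq_nonneg z xs us hf
  have hV_nonneg : ∀ k, 0 ≤ Jstar A B X U SS Q R xhat P (M + 1) (x k) := by
    intro k
    obtain ⟨xs, us, hf, _, _⟩ := hopt k
    exact le_csInf ⟨_, xs, us, hf, rfl⟩ fun b hb => hbdd (x k) hb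
  have hstep : ∀ k, Jstar A B X U SS Q R xhat P (M + 1) (x (k + 1))
      + stageCost Q R xhat (x k) (u k) ≤ Jstar A B X U SS Q R xhat P (M + 1) (x k) := by
    intro k
    obtain ⟨xs, us, hfeas, hcosteq, hu0⟩ := hopt k
    obtain ⟨hx0, hdynf, hX, hU, hSSf⟩ := hfeas
    obtain ⟨w, hwU, hwSS, hwdesc⟩ := hdesc (xs (M + 1)) hSSf
    set xs' : ℕ → Fin n → ℝ :=
      fun t => if t < M + 1 then xs (t + 1) else A.mulVec (xs (M + 1)) + B.mulVec w with hxs'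
    set us' : ℕ → Fin m → ℝ := fun t => if t + 1 < M + 1 then us (t + 1) else w with hus'
    have hfeas' : FeasSeq A B X U SS (M + 1) (x (k + 1)) xs' us' := by
      refine ⟨?_, ?_, ?_, ?_, ?_⟩
      · have h0 : (0 : ℕ) < M + 1 := Nat.succ_pos M
        simp only [hxs', if_pos h0]
        rw [hdynf 0 h0, hdyn k, hx0, hu0]
      · intro t ht
        by_cases h1 : t + 1 < M + 1
        · simp only [hxs', hus', if_pos h1, if_pos ht]
          exact hdynf (t + 1) h1
        · have hteq : t + 1 = M + 1 := Nat.le_antisymm ht (Nat.not_lt.1 h1)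
          simp only [hxs', hus', hteq, if_neg (lt_irrefl (M + 1)), if_neg h1, if_pos ht]
      · intro t ht
        by_cases h1 : t + 1 < M + 1
        · simp only [hxs', if_pos h1]
          exact hX (t + 1) h1
        · have hteq : t + 1 = M + 1 := Nat.le_antisymm ht (Nat.not_lt.1 h1)
          simp only [hxs', hteq, if_neg (lt_irrefl (M + 1))]
          exact hSSX hwSS
      · intro t ht
        by_cases h1 : t + 1 < M + 1
        · simp only [hus', if_pos h1]
          exact hU (t + 1) h1
        · simp only [hus', if_neg h1]
          exact hwU
      · simp only [hxs', if_neg (lt_irrefl (M + 1))]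
        exact hwSS
    have hle1 : Jstar A B X U SS Q R xhat P (M + 1) (x (k + 1))
        ≤ seqCost Q R xhat P (M + 1) xs' us' :=
      csInf_le ⟨0, hbdd (x (k + 1))⟩ ⟨xs', us', hfeas', rfl⟩
    have e1 : ∑ t ∈ Finset.range (M + 1), stageCost Q R xhat (xs' t) (us' t)
        = (∑ t ∈ Finset.range M, stageCost Q R xhat (xs (t + 1)) (us (t + 1)))
          + stageCost Q R xhat (xs (M + 1)) w := by
      rw [Finset.sum_range_succ]
      congr 1
      · refine Finset.sum_congr rfl fun t ht => ?_
        have ht' := Finset.mem_range.1 ht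
        simp [hxs', hus', Nat.lt_succ_of_lt ht', ht', ht'.le]
      · simp [hxs', hus', Nat.lt_succ_self]
    have e2 : ∑ t ∈ Finset.range (M + 1), stageCost Q R xhat (xs t) (us t)
        = (∑ t ∈ Finset.range M, stageCost Q R xhat (xs (t + 1)) (us (t + 1)))
          + stageCost Q R xhat (xs 0) (us 0) := Finset.sum_range_succ' _ M
    have e3 : xs' (M + 1) = A.mulVec (xs (M + 1)) + B.mulVec w := by
      simp [hxs']
    have e4 : stageCost Q R xhat (xs 0) (us 0) = stageCost Q R xhat (x k) (u k) := by
      rw [hx0, hu0]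
    have hfinal : seqCost Q R xhat P (M + 1) xs' us'
        ≤ seqCost Q R xhat P (M + 1) xs us - stageCost Q R xhat (x k) (u k) := by
      unfold seqCost
      rw [e1, e3, e2, e4]
      linarith
    rw [hcosteq] at hfinal
    linarith
  set V : ℕ → ℝ := fun k => Jstar A B X U SS Q R xhat P (M + 1) (x k) with hVdef
  have hanti : Antitone V := antitone_nat_of_succ_le fun k => by
    have h1 := hstep k
    have h2 := hstage_nonneg (x k) (u k)
    simp only [hVdef]
    linarith
  have hbddB : BddBelow (Set.range V) := ⟨0, by rintro _ ⟨k, rfl⟩; exact hV_nonneg k⟩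
  have hVtend : Filter.Tendsto V Filter.atTop (nhds (⨅ k, V k)) :=
    tendsto_atTop_ciInf hanti hbddB
  have hVtend' : Filter.Tendsto (fun k => V (k + 1)) Filter.atTop (nhds (⨅ k, V k)) :=
    hVtend.comp (Filter.tendsto_add_atTop_nat 1)
  have hdiff : Filter.Tendsto (fun k => V k - V (k + 1)) Filter.atTop (nhds 0) := by
    simpa using hVtend.sub hVtend'
  have hhtend : Filter.Tendsto (fun k => stageCost Q R xhat (x k) (u k))
      Filter.atTop (nhds 0) := by
    refine squeeze_zero (fun k => hstage_nonneg _ _) (fun k => ?_) hdiff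
    have := hstep k
    simp only [hVdef]
    linarith
  have hq : Filter.Tendsto (fun k => (x k - xhat) ⬝ᵥ Q.mulVec (x k - xhat))
      Filter.atTop (nhds 0) := by
    refine squeeze_zero (fun k => by simpa using hQ.posSemidef.dotProduct_mulVec_nonneg (x k - xhat))
      (fun k => ?_) hhtend
    have hr : 0 ≤ u k ⬝ᵥ R.mulVec (u k) := by simpa using hR.posSemidef.dotProduct_mulVec_nonneg (u k)
    unfold stageCost
    linarith
  obtain ⟨c, hc, hlow⟩ := quad_lower_aux hQ hn
  have hnorm2 : Filter.Tendsto (fun k => ‖x k - xhat‖ ^ 2) Filter.atTop (nhds 0) := by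
    have hq' : Filter.Tendsto
        (fun k => c⁻¹ * ((x k - xhat) ⬝ᵥ Q.mulVec (x k - xhat))) Filter.atTop (nhds 0) := by
      simpa using hq.const_mul c⁻¹
    refine squeeze_zero (fun k => sq_nonneg _) (fun k => ?_) hq'
    have := hlow (x k - xhat)
    rw [inv_mul_eq_div, le_div_iff₀ hc, mul_comm]
    exact this
  have hnorm : Filter.Tendsto (fun k => ‖x k - xhat‖) Filter.atTop (nhds 0) := by
    have hs : Filter.Tendsto (fun k => Real.sqrt (‖x k - xhat‖ ^ 2))
        Filter.atTop (nhds (Real.sqrt 0)) :=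
      (Real.continuous_sqrt.tendsto 0).comp hnorm2
    simpa [Real.sqrt_sq (norm_nonneg _)] using hs
  exact tendsto_iff_norm_sub_tendsto_zero.2 hnorm
end

section
/- The MPC value at the start of a task is bounded by every stored iteration cost: let SS and P be the sampled safe set and cost-to-go of a finite nonempty family of admissible trajectories to x̂, and let (xⱼ, uⱼ) be a trajectory of the family of length Tⱼ ≥ N with xⱼ(0) = x̂ᵖ. Then the restriction of (xⱼ, uⱼ) to its first N steps is an N-step feasible sequence from x̂ᵖ, and J*(x̂ᵖ) ≤ Σ_{t=0}^{Tⱼ−1} h(xⱼ(t), uⱼ(t)). -/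
open Matrix

lemma stageCost_nonneg {n m : ℕ} {Q : Matrix (Fin n) (Fin n) ℝ} {R : Matrix (Fin m) (Fin m) ℝ}
    (hQ : Q.PosDef) (hR : R.PosDef) (xhat x : Fin n → ℝ) (u : Fin m → ℝ) :
    0 ≤ stageCost Q R xhat x u := by
  have h1 := hQ.posSemidef.re_dotProduct_nonneg (x - xhat)
  have h2 := hR.posSemidef.re_dotProduct_nonneg u
  simpa [stageCost] using add_nonneg h1 h2

/-- the MPC value at the start of a task is bounded by every stored
iteration cost. If the stored trajectory `(xs j, us j)` of the family has length
`T j ≥ N` and starts at `xhatp`, then its first `N` steps form an `N`-step feasible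
sequence from `xhatp`, and `J*(xhatp) ≤ Σ_{t=0}^{Tj−1} h(xs j t, us j t)`. -/
theorem value_bounded_by_stored_cost {n m : ℕ}
    (A : Matrix (Fin n) (Fin n) ℝ) (B : Matrix (Fin n) (Fin m) ℝ)
    (X : Set (Fin n → ℝ)) (U : Set (Fin m → ℝ))
    (xhat xhatp : Fin n → ℝ)
    (Q : Matrix (Fin n) (Fin n) ℝ) (R : Matrix (Fin m) (Fin m) ℝ)
    (hQ : Q.PosDef) (hR : R.PosDef)
    (N : ℕ) (hN : 1 ≤ N)
    {ι : Type} [Fintype ι] [Nonempty ι]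
    (T : ι → ℕ) (xs : ι → ℕ → Fin n → ℝ) (us : ι → ℕ → Fin m → ℝ)
    (hadm : ∀ i, AdmTraj A B X U xhat (T i) (xs i) (us i))
    (j : ι) (hTj : N ≤ T j) (hstart : xs j 0 = xhatp) :
    FeasSeq A B X U (sampledSafeSet T xs) N xhatp (xs j) (us j) ∧
    Jstar A B X U (sampledSafeSet T xs) Q R xhat (costToGo Q R xhat T xs us) N xhatp ≤
      ∑ t ∈ Finset.range (T j), stageCost Q R xhat (xs j t) (us j t) := by
  obtain ⟨hdyn, hX, hU, hend⟩ := hadm j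
  have hnn := stageCost_nonneg hQ hR xhat
  -- cost-to-go nonneg
  have hP0 : ∀ z, 0 ≤ costToGo Q R xhat T xs us z := by
    intro z
    apply Real.sInf_nonneg
    rintro c ⟨i, t, ht, -, rfl⟩
    exact Finset.sum_nonneg fun k _ => hnn _ _
  have hfeas : FeasSeq A B X U (sampledSafeSet T xs) N xhatp (xs j) (us j) := by
    refine ⟨hstart, fun t ht => hdyn t (lt_of_lt_of_le ht hTj),
      fun t ht => hX _ (Nat.succ_le_of_lt (lt_of_lt_of_le ht hTj)),
      fun t ht => hU t (lt_of_lt_of_le ht hTj), ⟨j, N, hTj, rfl⟩⟩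
  refine ⟨hfeas, ?_⟩
  have hbdd : BddBelow {c | ∃ (x : ℕ → Fin n → ℝ) (u : ℕ → Fin m → ℝ),
      FeasSeq A B X U (sampledSafeSet T xs) N xhatp x u ∧
      c = seqCost Q R xhat (costToGo Q R xhat T xs us) N x u} := by
    refine ⟨0, ?_⟩
    rintro c ⟨x, u, -, rfl⟩
    exact add_nonneg (Finset.sum_nonneg fun k _ => hnn _ _) (hP0 _)
  have hmem : seqCost Q R xhat (costToGo Q R xhat T xs us) N (xs j) (us j) ∈
      {c | ∃ (x : ℕ → Fin n → ℝ) (u : ℕ → Fin m → ℝ),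
      FeasSeq A B X U (sampledSafeSet T xs) N xhatp x u ∧
      c = seqCost Q R xhat (costToGo Q R xhat T xs us) N x u} :=
    ⟨xs j, us j, hfeas, rfl⟩
  refine le_trans (csInf_le hbdd hmem) ?_
  have hPle : costToGo Q R xhat T xs us (xs j N) ≤
      ∑ k ∈ Finset.Ico N (T j), stageCost Q R xhat (xs j k) (us j k) := by
    apply csInf_le
    · refine ⟨0, ?_⟩
      rintro c ⟨i, t, ht, -, rfl⟩
      exact Finset.sum_nonneg fun k _ => hnn _ _
    · exact ⟨j, N, hTj, rfl, rfl⟩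
  have hsplit : (∑ t ∈ Finset.range N, stageCost Q R xhat (xs j t) (us j t)) +
      ∑ k ∈ Finset.Ico N (T j), stageCost Q R xhat (xs j k) (us j k) =
      ∑ t ∈ Finset.range (T j), stageCost Q R xhat (xs j t) (us j t) := by
    rw [Finset.range_eq_Ico, Finset.sum_Ico_consecutive _ (Nat.zero_le N) hTj, Finset.range_eq_Ico]
  calc seqCost Q R xhat (costToGo Q R xhat T xs us) N (xs j) (us j)
      ≤ (∑ t ∈ Finset.range N, stageCost Q R xhat (xs j t) (us j t)) +
        ∑ k ∈ Finset.Ico N (T j), stageCost Q R xhat (xs j k) (us j k) :=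
        add_le_add_right hPle _
    _ = _ := hsplit
end

section
/- Telescoping bound on the realized closed-loop cost: suppose SS ⊆ X, P : SS → ℝ satisfies P ≥ 0 and the descent property (for every z ∈ SS there exists u ∈ U with A z + B u ∈ SS and P(z) ≥ h(z,u) + P(A z + B u)). Let x : ℕ → ℝⁿ and u : ℕ → ℝᵐ be a closed-loop trajectory with x(k+1) = A x(k) + B u(k) such that for every k there exists an N-step feasible sequence from x(k) attaining the infimum J*(x(k)) whose first input is u(k). Then for every K ≥ 0, Σ_{k=0}^{K−1} h(x(k), u(k)) ≤ J*(x(0)). -/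
open Matrix

/-- telescoping bound on the realized closed-loop cost. Along any
closed-loop trajectory whose inputs are first inputs of optimal `N`-step feasible
sequences, the accumulated stage cost up to any time `K` is bounded by `J*(x(0))`. -/
theorem telescoping_closed_loop_cost_bound {n m : ℕ}
    (A : Matrix (Fin n) (Fin n) ℝ) (B : Matrix (Fin n) (Fin m) ℝ)
    (X : Set (Fin n → ℝ)) (U : Set (Fin m → ℝ)) (SS : Set (Fin n → ℝ))
    (Q : Matrix (Fin n) (Fin n) ℝ) (R : Matrix (Fin m) (Fin m) ℝ) (xhat : Fin n → ℝ)
    (hQ : Q.PosDef) (hR : R.PosDef)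
    (P : (Fin n → ℝ) → ℝ) (N : ℕ) (hN : 1 ≤ N)
    (hSSX : SS ⊆ X)
    (hP0 : ∀ z ∈ SS, 0 ≤ P z)
    (hdesc : ∀ z ∈ SS, ∃ u ∈ U, A.mulVec z + B.mulVec u ∈ SS ∧
      stageCost Q R xhat z u + P (A.mulVec z + B.mulVec u) ≤ P z)
    (x : ℕ → Fin n → ℝ) (u : ℕ → Fin m → ℝ)
    (hdyn : ∀ k, x (k + 1) = A.mulVec (x k) + B.mulVec (u k))
    (hopt : ∀ k, ∃ (xs : ℕ → Fin n → ℝ) (us : ℕ → Fin m → ℝ),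
      FeasSeq A B X U SS N (x k) xs us ∧
      seqCost Q R xhat P N xs us = Jstar A B X U SS Q R xhat P N (x k) ∧
      us 0 = u k) :
    ∀ K : ℕ, (∑ k ∈ Finset.range K, stageCost Q R xhat (x k) (u k)) ≤
      Jstar A B X U SS Q R xhat P N (x 0) := by
  classical
  obtain ⟨M, rfl⟩ : ∃ M, N = M + 1 := ⟨N - 1, (Nat.succ_pred_eq_of_pos hN).symm⟩
  set N := M + 1 with hNdef
  -- stage cost is nonnegative
  have hstage : ∀ (a : Fin n → ℝ) (b : Fin m → ℝ), 0 ≤ stageCost Q R xhat a b := by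
    intro a b
    have h1 := hQ.posSemidef.dotProduct_mulVec_nonneg (a - xhat)
    have h2 := hR.posSemidef.dotProduct_mulVec_nonneg b
    simp only [star_trivial] at h1 h2
    unfold stageCost
    positivity
  -- cost set bounded below by 0
  have hbdd : ∀ x0 : Fin n → ℝ, ∀ c ∈ {c | ∃ (xs : ℕ → Fin n → ℝ) (us : ℕ → Fin m → ℝ),
      FeasSeq A B X U SS N x0 xs us ∧ c = seqCost Q R xhat P N xs us}, (0:ℝ) ≤ c := by
    intro x0 c hc
    obtain ⟨xs, us, ⟨_, _, _, _, hterm⟩, rfl⟩ := hc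
    unfold seqCost
    have := hP0 _ hterm
    have hsum : 0 ≤ ∑ t ∈ Finset.range N, stageCost Q R xhat (xs t) (us t) :=
      Finset.sum_nonneg fun t _ => hstage _ _
    linarith
  have hJnn : ∀ x0, 0 ≤ Jstar A B X U SS Q R xhat P N x0 := fun x0 =>
    Real.sInf_nonneg (hbdd x0)
  -- key descent inequality along the closed loop
  have key : ∀ k, stageCost Q R xhat (x k) (u k) + Jstar A B X U SS Q R xhat P N (x (k+1))
      ≤ Jstar A B X U SS Q R xhat P N (x k) := by
    intro k
    obtain ⟨xs, us, ⟨hx0, hdyn', hX, hU, hterm⟩, hcost, hu0⟩ := hopt k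
    obtain ⟨ustar, hustarU, hnext, hdecr⟩ := hdesc _ hterm
    set xs' : ℕ → Fin n → ℝ := fun t =>
      if t ≤ M then xs (t+1) else A.mulVec (xs (M+1)) + B.mulVec ustar with hxs'
    set us' : ℕ → Fin m → ℝ := fun t => if t < M then us (t+1) else ustar with hus'
    have hxs'le : ∀ t, t ≤ M → xs' t = xs (t+1) := by
      intro t ht; simp [hxs', ht]
    have hxs'N : xs' (M+1) = A.mulVec (xs (M+1)) + B.mulVec ustar := by
      simp [hxs']
    have hfeas' : FeasSeq A B X U SS N (x (k+1)) xs' us' := by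
      refine ⟨?_, ?_, ?_, ?_, ?_⟩
      · rw [hxs'le 0 (Nat.zero_le _), hdyn' 0 (Nat.succ_pos _), hx0, hu0, hdyn k]
      · intro t ht
        rcases Nat.lt_succ_iff_lt_or_eq.mp ht with ht | rfl
        · rw [hxs'le (t+1) ht, hxs'le t (le_of_lt ht)]
          have : us' t = us (t+1) := by simp [hus', ht]
          rw [this]
          exact hdyn' (t+1) (Nat.succ_lt_succ ht)
        · rw [hxs'N, hxs'le t le_rfl]
          have : us' t = ustar := by simp [hus']
          rw [this]
      · intro t ht
        rcases Nat.lt_succ_iff_lt_or_eq.mp ht with ht | rfl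
        · rw [hxs'le (t+1) ht]; exact hX (t+1) (Nat.succ_lt_succ ht)
        · rw [hxs'N]; exact hSSX hnext
      · intro t ht
        rcases Nat.lt_succ_iff_lt_or_eq.mp ht with ht | rfl
        · have : us' t = us (t+1) := by simp [hus', ht]
          rw [this]; exact hU (t+1) (Nat.succ_lt_succ ht)
        · have : us' t = ustar := by simp [hus']
          rw [this]; exact hustarU
      · rw [show (N : ℕ) = M + 1 from rfl, hxs'N]; exact hnext
    have hmem : seqCost Q R xhat P N xs' us' ∈ {c | ∃ (a : ℕ → Fin n → ℝ) (b : ℕ → Fin m → ℝ),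
        FeasSeq A B X U SS N (x (k+1)) a b ∧ c = seqCost Q R xhat P N a b} :=
      ⟨xs', us', hfeas', rfl⟩
    have hle : Jstar A B X U SS Q R xhat P N (x (k+1)) ≤ seqCost Q R xhat P N xs' us' :=
      csInf_le ⟨0, fun c hc => hbdd _ c hc⟩ hmem
    -- compute costs
    have hcost' : seqCost Q R xhat P N xs' us'
        ≤ seqCost Q R xhat P N xs us - stageCost Q R xhat (x k) (u k) := by
      have e1 : seqCost Q R xhat P N xs' us'
          = (∑ t ∈ Finset.range M, stageCost Q R xhat (xs (t+1)) (us (t+1)))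
            + stageCost Q R xhat (xs (M+1)) ustar
            + P (A.mulVec (xs (M+1)) + B.mulVec ustar) := by
        unfold seqCost
        rw [show (N : ℕ) = M + 1 from rfl, Finset.sum_range_succ, hxs'N]
        congr 2
        · apply Finset.sum_congr rfl
          intro t ht
          rw [Finset.mem_range] at ht
          rw [hxs'le t (le_of_lt ht)]
          congr 1
          simp [hus', ht]
        · rw [hxs'le M le_rfl]
          congr 1
          simp [hus']
      have e2 : seqCost Q R xhat P N xs us
          = stageCost Q R xhat (x k) (u k)
            + (∑ t ∈ Finset.range M, stageCost Q R xhat (xs (t+1)) (us (t+1)))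
            + P (xs (M+1)) := by
        unfold seqCost
        rw [show (N : ℕ) = M + 1 from rfl, Finset.sum_range_succ']
        rw [hx0, hu0]
        ring
      rw [e1, e2]
      linarith [hdecr]
    linarith [hcost ▸ hcost', hcost]
  -- telescoping
  have main : ∀ K : ℕ, (∑ k ∈ Finset.range K, stageCost Q R xhat (x k) (u k))
      + Jstar A B X U SS Q R xhat P N (x K) ≤ Jstar A B X U SS Q R xhat P N (x 0) := by
    intro K
    induction K with
    | zero => simp
    | succ K ih =>
      rw [Finset.sum_range_succ]
      have := key K
      linarith
  intro K
  have := main K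
  have := hJnn (x K)
  linarith
end
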